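/- arXiv:1710.08832 — 2 statements merged into one kernel-verified Lean document; each statement's English description precedes it below -/
import Mathlib

section
/- There is no singular Hermitian metric on the trivial line bundle over ℂ (equivalently, no conformal pseudo-metric λ(z)|dz|² on ℂ) which is locally bounded, smooth and nondegenerate outside a discrete set, and whose Gaussian curvature on the smooth locus is bounded above by a negative constant -c < 0. Concretely: there is no upper semicontinuous function λ : ℂ → [0,∞), locally bounded above, not identically zero, smooth and positive outside a discrete set S, satisfying Δ log λ ≥ 2c·λ on ℂ \ S. -/
open Complex

/-- Laplacian of a real-valued function on `ℂ`, encoded through second derivatives in the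
two real coordinate directions. -/
noncomputable def laplacianC (u : ℂ → ℝ) (z : ℂ) : ℝ :=
  iteratedDeriv 2 (fun x : ℝ => u (z + (x : ℂ))) 0 +
  iteratedDeriv 2 (fun y : ℝ => u (z + (y : ℂ) * Complex.I)) 0

open Filter Topology

section Helpers

lemma itd2_eq (f f' : ℝ → ℝ) (d : ℝ)
    (h1 : ∀ᶠ x in 𝓝 (0:ℝ), HasDerivAt f (f' x) x)
    (h2 : HasDerivAt f' d 0) : iteratedDeriv 2 f 0 = d := by
  have hd : deriv f =ᶠ[𝓝 (0:ℝ)] f' := h1.mono fun x hx => hx.deriv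
  have h3 : iteratedDeriv 2 f 0 = deriv (deriv f) 0 := by
    simp [iteratedDeriv_succ, iteratedDeriv_zero]
  rw [h3, hd.deriv_eq]
  exact h2.deriv

lemma deriv_diffAt_of_contDiffAt {f : ℝ → ℝ} (hf : ContDiffAt ℝ 2 f 0) :
    DifferentiableAt ℝ (deriv f) 0 := by
  obtain ⟨u, hu, hcu⟩ := hf.contDiffOn le_rfl (by simp)
  obtain ⟨v, hvu, hvo, hv0⟩ := mem_nhds_iff.1 hu
  have hcv : ContDiffOn ℝ (1 + 1) f v := by exact_mod_cast (hcu.mono hvu)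
  have h1 : ContDiffOn ℝ 1 (deriv f) v :=
    ((contDiffOn_succ_iff_deriv_of_isOpen hvo).1 hcv).2.2
  exact ((h1.differentiableOn one_ne_zero) 0 hv0).differentiableAt (hvo.mem_nhds hv0)

lemma itd2_add (f g : ℝ → ℝ) (hf : ContDiffAt ℝ 2 f 0) (hg : ContDiffAt ℝ 2 g 0) :
    iteratedDeriv 2 (fun x => f x + g x) 0
      = iteratedDeriv 2 f 0 + iteratedDeriv 2 g 0 := by
  have hfe : ∀ᶠ x in 𝓝 (0:ℝ), DifferentiableAt ℝ f x :=
    (hf.eventually (by norm_num)).mono fun x hx => hx.differentiableAt (by norm_num)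
  have hge : ∀ᶠ x in 𝓝 (0:ℝ), DifferentiableAt ℝ g x :=
    (hg.eventually (by norm_num)).mono fun x hx => hx.differentiableAt (by norm_num)
  have hsum : deriv (fun x => f x + g x) =ᶠ[𝓝 (0:ℝ)] fun x => deriv f x + deriv g x := by
    filter_upwards [hfe, hge] with x hfx hgx
    exact deriv_add hfx hgx
  have h2 : iteratedDeriv 2 (fun x => f x + g x) 0
      = deriv (deriv (fun x => f x + g x)) 0 := by
    simp [iteratedDeriv_succ, iteratedDeriv_zero]
  rw [h2, hsum.deriv_eq, deriv_fun_add (deriv_diffAt_of_contDiffAt hf) (deriv_diffAt_of_contDiffAt hg)]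
  simp [iteratedDeriv_succ, iteratedDeriv_zero]

lemma itd2_const_mul (a : ℝ) (f : ℝ → ℝ) (hf : ContDiffAt ℝ 2 f 0) :
    iteratedDeriv 2 (fun x => a * f x) 0 = a * iteratedDeriv 2 f 0 := by
  have hfe : ∀ᶠ x in 𝓝 (0:ℝ), DifferentiableAt ℝ f x :=
    (hf.eventually (by norm_num)).mono fun x hx => hx.differentiableAt (by norm_num)
  have hsum : deriv (fun x => a * f x) =ᶠ[𝓝 (0:ℝ)] fun x => a * deriv f x := by
    filter_upwards [hfe] with x hfx
    exact deriv_const_mul a hfx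
  have h2 : iteratedDeriv 2 (fun x => a * f x) 0
      = deriv (deriv (fun x => a * f x)) 0 := by
    simp [iteratedDeriv_succ, iteratedDeriv_zero]
  rw [h2, hsum.deriv_eq, deriv_const_mul a (deriv_diffAt_of_contDiffAt hf)]
  simp [iteratedDeriv_succ, iteratedDeriv_zero]

lemma secondDeriv_nonpos_of_isLocalMax {f : ℝ → ℝ} (hf : ContDiffAt ℝ 2 f 0)
    (h : IsLocalMax f 0) : iteratedDeriv 2 f 0 ≤ 0 := by
  by_contra hpos
  push_neg at hpos
  have h2 : iteratedDeriv 2 f 0 = deriv (deriv f) 0 := by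
    simp [iteratedDeriv_succ, iteratedDeriv_zero]
  set d := deriv (deriv f) 0 with hd
  rw [h2] at hpos
  have hder : HasDerivAt (deriv f) d 0 := (deriv_diffAt_of_contDiffAt hf).hasDerivAt
  have hf0 : deriv f 0 = 0 := h.deriv_eq_zero
  have hslope : Tendsto (slope (deriv f) 0) (𝓝[≠] (0:ℝ)) (𝓝 d) :=
    hasDerivAt_iff_tendsto_slope.1 hder
  have hev : ∀ᶠ x in 𝓝[>] (0:ℝ), 0 < deriv f x := by
    have h1 : ∀ᶠ x in 𝓝[≠] (0:ℝ), 0 < slope (deriv f) 0 x :=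
      hslope.eventually (eventually_gt_nhds hpos)
    have h2 : ∀ᶠ x in 𝓝[>] (0:ℝ), 0 < slope (deriv f) 0 x :=
      h1.filter_mono (nhdsWithin_mono _ fun x hx => ne_of_gt hx)
    filter_upwards [h2, self_mem_nhdsWithin] with x hx hx0
    have hsl : slope (deriv f) 0 x = deriv f x / x := by
      simp [slope_def_field, hf0]
    rw [hsl] at hx
    have hxpos : (0:ℝ) < x := hx0
    exact (div_pos_iff.1 hx).elim (fun h => h.1) (fun h => absurd hxpos (not_lt.2 h.2.le))
  obtain ⟨u, hu, hcu⟩ := hf.contDiffOn le_rfl (by simp)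
  obtain ⟨v, hvu, hvo, hv0⟩ := mem_nhds_iff.1 hu
  obtain ⟨δ, hδ, hball⟩ := Metric.isOpen_iff.1 hvo 0 hv0
  obtain ⟨δ₂, hδ₂, hδ₂pos⟩ : ∃ δ₂ > 0, ∀ x ∈ Set.Ioo (0:ℝ) δ₂, 0 < deriv f x := by
    rcases (nhdsGT_basis (0:ℝ)).eventually_iff.1 hev with ⟨b, hb, hbs⟩
    exact ⟨b, hb, fun x hx => hbs ⟨hx.1, hx.2⟩⟩
  obtain ⟨η, hη, hηmax⟩ := Metric.eventually_nhds_iff_ball.1 h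
  set m := min (min δ δ₂) η with hm
  have hm1 : m ≤ δ := le_trans (min_le_left _ _) (min_le_left _ _)
  have hm2 : m ≤ δ₂ := le_trans (min_le_left _ _) (min_le_right _ _)
  have hm3 : m ≤ η := min_le_right _ _
  have hmpos : 0 < m := lt_min (lt_min hδ hδ₂) hη
  set r := m / 2 with hr
  have hrpos : 0 < r := by positivity
  have hmono : StrictMonoOn f (Set.Icc 0 r) := by
    apply strictMonoOn_of_deriv_pos (convex_Icc _ _)
    · apply ContinuousOn.mono (hcu.continuousOn.mono hvu)
      intro x hx
      apply hball
      rw [Set.mem_Icc] at hx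
      simp only [Metric.mem_ball, Real.dist_eq, sub_zero]
      rw [_root_.abs_of_nonneg hx.1]
      linarith [hx.2]
    · intro x hx
      rw [interior_Icc, Set.mem_Ioo] at hx
      exact hδ₂pos x ⟨hx.1, by linarith [hx.2]⟩
  have hlt : f 0 < f r := hmono (Set.left_mem_Icc.2 hrpos.le) (Set.right_mem_Icc.2 hrpos.le) hrpos
  have hle : f r ≤ f 0 := by
    apply hηmax
    simp only [Metric.mem_ball, Real.dist_eq, sub_zero]
    rw [_root_.abs_of_pos hrpos]; linarith
  linarith

lemma lineX_contDiffAt {u : ℂ → ℝ} {z : ℂ} (hu : ContDiffAt ℝ 2 u z) :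
    ContDiffAt ℝ 2 (fun x : ℝ => u (z + (x : ℝ))) 0 := by
  have hmap : ContDiff ℝ 2 (fun x : ℝ => z + (x : ℝ)) :=
    contDiff_const.add (Complex.ofRealCLM.contDiff.of_le le_top)
  have hthis : ContDiffAt ℝ 2 (fun x : ℝ => z + (x : ℝ)) 0 := hmap.contDiffAt
  have h2 := ContDiffAt.comp (x := (0:ℝ)) (g := u) (f := fun x : ℝ => z + (x : ℝ))
    (by simpa using hu) hthis
  exact h2

lemma lineY_contDiffAt {u : ℂ → ℝ} {z : ℂ} (hu : ContDiffAt ℝ 2 u z) :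
    ContDiffAt ℝ 2 (fun y : ℝ => u (z + (y : ℝ) * Complex.I)) 0 := by
  have hmap : ContDiff ℝ 2 (fun y : ℝ => z + (y : ℝ) * Complex.I) :=
    contDiff_const.add
      ((Complex.ofRealCLM.contDiff.of_le (le_top : (2 : WithTop ℕ∞) ≤ ⊤)).mul contDiff_const)
  have h2 := ContDiffAt.comp (x := (0:ℝ)) (g := u) (f := fun y : ℝ => z + (y : ℝ) * Complex.I)
    (by simpa using hu) hmap.contDiffAt
  exact h2

lemma laplacianC_add (u v : ℂ → ℝ) (z : ℂ) (hu : ContDiffAt ℝ 2 u z)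
    (hv : ContDiffAt ℝ 2 v z) :
    laplacianC (fun w => u w + v w) z = laplacianC u z + laplacianC v z := by
  unfold laplacianC
  rw [itd2_add _ _ (lineX_contDiffAt hu) (lineX_contDiffAt hv),
      itd2_add _ _ (lineY_contDiffAt hu) (lineY_contDiffAt hv)]
  ring

lemma laplacianC_const_mul (a : ℝ) (u : ℂ → ℝ) (z : ℂ) (hu : ContDiffAt ℝ 2 u z) :
    laplacianC (fun w => a * u w) z = a * laplacianC u z := by
  unfold laplacianC
  rw [itd2_const_mul _ _ (lineX_contDiffAt hu), itd2_const_mul _ _ (lineY_contDiffAt hu)]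
  ring

lemma laplacianC_sum {ι : Type*} (T : Finset ι) (v : ι → ℂ → ℝ) (z : ℂ)
    (hv : ∀ s ∈ T, ContDiffAt ℝ 2 (v s) z) :
    laplacianC (fun w => ∑ s ∈ T, v s w) z = ∑ s ∈ T, laplacianC (v s) z := by
  classical
  induction T using Finset.induction with
  | empty =>
      simp only [Finset.sum_empty]
      unfold laplacianC
      simp [iteratedDeriv_succ, iteratedDeriv_zero]
  | insert s T' hnot ih =>
      have h1 : ContDiffAt ℝ 2 (v s) z := hv s (Finset.mem_insert_self s T')
      have h2 : ∀ t ∈ T', ContDiffAt ℝ 2 (v t) z := fun t ht => hv t (Finset.mem_insert_of_mem ht)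
      have hsumcd : ContDiffAt ℝ 2 (fun w => ∑ t ∈ T', v t w) z := by
        apply ContDiffAt.sum
        intro t ht
        exact h2 t ht
      have heq : (fun w => ∑ t ∈ insert s T', v t w)
          = fun w => v s w + ∑ t ∈ T', v t w := by
        funext w; rw [Finset.sum_insert hnot]
      rw [heq, laplacianC_add _ _ _ h1 hsumcd, ih h2, Finset.sum_insert hnot]

lemma itd2_log_sq (c₁ a e : ℝ) (h0 : c₁ + e * a ^ 2 ≠ 0) :
    iteratedDeriv 2 (fun x => Real.log (c₁ + e * (a + x) ^ 2)) 0
      = (2 * e * (c₁ + e * a ^ 2) - 4 * e ^ 2 * a ^ 2) / (c₁ + e * a ^ 2) ^ 2 := by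
  set g : ℝ → ℝ := fun x => c₁ + e * (a + x) ^ 2 with hg
  have hgd : ∀ x : ℝ, HasDerivAt g (2 * e * (a + x)) x := by
    intro x
    have h1 : HasDerivAt (fun x : ℝ => a + x) 1 x := (hasDerivAt_id x).const_add a
    have h2 : HasDerivAt (fun x : ℝ => (a + x) ^ 2) (2 * (a + x) ^ 1 * 1) x := h1.pow 2
    have h3 := (h2.const_mul e).const_add c₁
    have h4 : 2 * e * (a + x) = e * (2 * (a + x) ^ 1 * 1) := by ring
    rw [h4]
    exact h3
  have hg0 : g 0 = c₁ + e * a ^ 2 := by simp [hg]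
  have hcont : Continuous g := by fun_prop
  have hne : ∀ᶠ x in 𝓝 (0:ℝ), g x ≠ 0 := by
    have hca : ContinuousAt g 0 := hcont.continuousAt
    exact hca.eventually_ne (by rw [hg0]; exact h0)
  have h1 : ∀ᶠ x in 𝓝 (0:ℝ), HasDerivAt (fun x => Real.log (g x)) (2 * e * (a + x) / g x) x := by
    filter_upwards [hne] with x hx
    exact (hgd x).log hx
  have h2 : HasDerivAt (fun x => 2 * e * (a + x) / g x)
      ((2 * e * g 0 - 2 * e * (a + 0) * (2 * e * (a + 0))) / g 0 ^ 2) 0 := by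
    have hu : HasDerivAt (fun x : ℝ => 2 * e * (a + x)) (2 * e) 0 := by
      simpa using ((hasDerivAt_id (0:ℝ)).const_add a).const_mul (2 * e)
    have h0' : g 0 ≠ 0 := by rw [hg0]; exact h0
    exact hu.div (hgd 0) h0'
  rw [itd2_eq _ _ _ h1 h2, hg0]
  field_simp
  ring

lemma lap_log_normSq_sub (s z : ℂ) (hz : z ≠ s) :
    laplacianC (fun w => Real.log (normSq (w - s))) z = 0 := by
  set a := z.re - s.re with ha
  set b := z.im - s.im with hb
  have hab : a ^ 2 + b ^ 2 ≠ 0 := by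
    have h1 : 0 < normSq (z - s) := normSq_pos.2 (sub_ne_zero.2 hz)
    have h2 : normSq (z - s) = a ^ 2 + b ^ 2 := by
      simp only [normSq_apply, Complex.sub_re, Complex.sub_im, ha, hb]; ring
    rw [h2] at h1; exact h1.ne'
  have hx : (fun x : ℝ => Real.log (normSq (z + (x:ℝ) - s)))
      = fun x => Real.log (b ^ 2 + 1 * (a + x) ^ 2) := by
    funext x; congr 1
    simp only [normSq_apply, Complex.sub_re, Complex.sub_im, Complex.add_re, Complex.add_im,
      Complex.ofReal_re, Complex.ofReal_im, ha, hb]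
    ring
  have hy : (fun y : ℝ => Real.log (normSq (z + (y:ℝ) * Complex.I - s)))
      = fun y => Real.log (a ^ 2 + 1 * (b + y) ^ 2) := by
    funext y; congr 1
    simp only [normSq_apply, Complex.sub_re, Complex.sub_im, Complex.add_re, Complex.add_im,
      Complex.mul_re, Complex.mul_im, Complex.I_re, Complex.I_im,
      Complex.ofReal_re, Complex.ofReal_im, ha, hb]
    ring
  have h0x : b ^ 2 + 1 * a ^ 2 ≠ 0 := by intro h; apply hab; linarith [h]
  have h0y : a ^ 2 + 1 * b ^ 2 ≠ 0 := by intro h; apply hab; linarith [h]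
  simp only [laplacianC]
  rw [hx, hy, itd2_log_sq (b ^ 2) a 1 h0x, itd2_log_sq (a ^ 2) b 1 h0y]
  clear_value a b
  have e1 : b ^ 2 + 1 * a ^ 2 = a ^ 2 + b ^ 2 := by ring
  have e2 : a ^ 2 + 1 * b ^ 2 = a ^ 2 + b ^ 2 := by ring
  rw [e1, e2, ← add_div, div_eq_zero_iff]
  left; ring

lemma lap_log_Rsq_sub (R : ℝ) (z : ℂ) (h : normSq z < R ^ 2) :
    laplacianC (fun w => Real.log (R ^ 2 - normSq w)) z
      = -(4 * R ^ 2) / (R ^ 2 - normSq z) ^ 2 := by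
  set p := z.re with hp
  set q := z.im with hq
  have hzsq : normSq z = p ^ 2 + q ^ 2 := by
    simp only [normSq_apply, hp, hq]; ring
  have hg0 : R ^ 2 - (p ^ 2 + q ^ 2) ≠ 0 := by rw [hzsq] at h; intro h'; linarith
  have hx : (fun x : ℝ => Real.log (R ^ 2 - normSq (z + (x:ℝ))))
      = fun x => Real.log ((R ^ 2 - q ^ 2) + (-1) * (p + x) ^ 2) := by
    funext x; congr 1
    simp only [normSq_apply, Complex.add_re, Complex.add_im,
      Complex.ofReal_re, Complex.ofReal_im, hp, hq]
    ring
  have hy : (fun y : ℝ => Real.log (R ^ 2 - normSq (z + (y:ℝ) * Complex.I)))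
      = fun y => Real.log ((R ^ 2 - p ^ 2) + (-1) * (q + y) ^ 2) := by
    funext y; congr 1
    simp only [normSq_apply, Complex.add_re, Complex.add_im, Complex.mul_re, Complex.mul_im,
      Complex.I_re, Complex.I_im, Complex.ofReal_re, Complex.ofReal_im, hp, hq]
    ring
  have h0x : (R ^ 2 - q ^ 2) + (-1) * p ^ 2 ≠ 0 := by intro h'; apply hg0; linarith
  have h0y : (R ^ 2 - p ^ 2) + (-1) * q ^ 2 ≠ 0 := by intro h'; apply hg0; linarith
  simp only [laplacianC]
  rw [hx, hy, itd2_log_sq (R ^ 2 - q ^ 2) p (-1) h0x, itd2_log_sq (R ^ 2 - p ^ 2) q (-1) h0y,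
    hzsq]
  clear_value p q
  have e1 : (R ^ 2 - q ^ 2) + (-1) * p ^ 2 = R ^ 2 - (p ^ 2 + q ^ 2) := by ring
  have e2 : (R ^ 2 - p ^ 2) + (-1) * q ^ 2 = R ^ 2 - (p ^ 2 + q ^ 2) := by ring
  rw [e1, e2, ← add_div]
  rw [div_eq_div_iff (by positivity) (by positivity)]
  ring

lemma finite_discrete_inter (S : Set ℂ)
    (hdisc : ∀ z ∈ S, ∃ ε > 0, ∀ w ∈ S, w ≠ z → ε ≤ dist w z)
    (hS : IsClosed S) (R : ℝ) : (S ∩ Metric.closedBall (0:ℂ) R).Finite := by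
  classical
  set K := S ∩ Metric.closedBall (0:ℂ) R with hK
  have hKc : IsCompact K :=
    (isCompact_closedBall (0:ℂ) R).of_isClosed_subset
      (hS.inter Metric.isClosed_closedBall) Set.inter_subset_right
  choose! ε hεpos hsep using hdisc
  obtain ⟨t, htK, hcov⟩ := hKc.elim_nhds_subcover (fun z => Metric.ball z (ε z))
    (fun z hz => Metric.ball_mem_nhds z (hεpos z hz.1))
  apply Set.Finite.subset t.finite_toSet
  intro w hw
  obtain ⟨x, hxt, hwx⟩ := Set.mem_iUnion₂.1 (hcov hw)
  have hxK : x ∈ K := htK x hxt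
  by_cases hwexq : w = x
  · simpa [hwexq] using hxt
  · exfalso
    have := hsep x hxK.1 w hw.1 hwexq
    rw [Metric.mem_ball] at hwx
    linarith

lemma continuousAt_finset_prod' {ι : Type*} (t : Finset ι) (f : ι → ℂ → ℝ) (x : ℂ)
    (h : ∀ i ∈ t, ContinuousAt (f i) x) :
    ContinuousAt (fun w => ∏ i ∈ t, f i w) x := by
  classical
  revert h
  induction t using Finset.induction with
  | empty => intro _; simpa using continuousAt_const
  | insert i t' hnot ih =>
      intro h
      have heq : (fun w => ∏ j ∈ insert i t', f j w) = fun w => f i w * ∏ j ∈ t', f j w :=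
        funext fun w => Finset.prod_insert hnot
      rw [heq]
      exact (h i (Finset.mem_insert_self i t')).mul
        (ih fun j hj => h j (Finset.mem_insert_of_mem hj))

lemma continuous_normSq' : Continuous (fun z : ℂ => Complex.normSq z) := by
  have h : (fun z : ℂ => Complex.normSq z) = fun z : ℂ => z.re * z.re + z.im * z.im :=
    funext fun z => Complex.normSq_apply z
  rw [h]
  exact (Complex.continuous_re.mul Complex.continuous_re).add
    (Complex.continuous_im.mul Complex.continuous_im)

end Helpers

set_option maxHeartbeats 1600000 in
/-- Ahlfors–Schwarz: there is no conformal pseudo-metric `λ(z)|dz|²` on `ℂ`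
which is upper semicontinuous, locally bounded above, not identically zero, nonnegative,
smooth and positive outside a discrete closed set `S`, and with Gaussian curvature at most
`-c < 0` (i.e. `Δ log λ ≥ 2cλ`) on `ℂ \ S`. -/
theorem no_metric_on_C_with_negative_curvature (c : ℝ) (hc : 0 < c) :
    ¬ ∃ (lam : ℂ → ℝ) (S : Set ℂ),
      UpperSemicontinuous lam ∧
      (∀ z : ℂ, ∃ ε > 0, BddAbove (lam '' Metric.ball z ε)) ∧
      (∀ z, 0 ≤ lam z) ∧
      (∃ z, lam z ≠ 0) ∧
      (∀ z ∈ S, ∃ ε > 0, ∀ w ∈ S, w ≠ z → ε ≤ dist w z) ∧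
      IsClosed S ∧
      ContDiffOn ℝ (⊤ : ℕ∞) lam Sᶜ ∧
      (∀ z ∈ Sᶜ, 0 < lam z) ∧
      (∀ z ∈ Sᶜ, 2 * c * lam z ≤ laplacianC (fun w => Real.log (lam w)) z) := by
  rintro ⟨lam, S, -, hbdd, hnn, -, hdisc, hScl, hsm, hpos, hcurv⟩
  have hSo : IsOpen Sᶜ := hScl.isOpen_compl
  -- a point outside S
  obtain ⟨z1, hz1S⟩ : ∃ z1, z1 ∉ S := by
    by_contra h
    push_neg at h
    obtain ⟨ε, hε, hsep⟩ := hdisc 0 (h 0)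
    have h2 := hsep (((ε/2 : ℝ) : ℂ)) (h _) (by
      simp only [ne_eq, Complex.ofReal_eq_zero]
      positivity)
    rw [Complex.dist_eq, sub_zero, Complex.norm_real, Real.norm_eq_abs, _root_.abs_of_pos (by positivity)] at h2
    linarith
  have hap : 0 < lam z1 := hpos z1 hz1S
  obtain ⟨R, hRpos, hmR, hmain⟩ :
      ∃ R : ℝ, 0 < R ∧ normSq z1 < R^2 ∧ 4*R^2/c < lam z1 * (R^2 - normSq z1)^2 := by
    set a := lam z1 with ha
    set m := normSq z1 with hm
    have hm0 : 0 ≤ m := normSq_nonneg z1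
    set K : ℝ := max (2*m+1) (16/(a*c)+1) with hKdef
    have hK1 : 2*m+1 ≤ K := le_max_left _ _
    have hK2 : 16/(a*c)+1 ≤ K := le_max_right _ _
    have hK0 : 0 ≤ K := le_trans (by positivity) hK1
    refine ⟨Real.sqrt K, Real.sqrt_pos.2 (lt_of_lt_of_le (by positivity) hK1), ?_, ?_⟩
    · rw [Real.sq_sqrt hK0]; linarith
    · rw [Real.sq_sqrt hK0]
      have h16 : 16/(a*c) < K := by linarith
      have h16' : 16 < K * (a*c) := by rw [div_lt_iff₀ (by positivity)] at h16; linarith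
      rw [div_lt_iff₀ hc]
      have hgh : K/2 < K - m := by linarith
      have hK0' : (0:ℝ) < K := by linarith
      nlinarith [sq_nonneg (K - m), hK0', hgh, hap, hc, hm0]
  have hg1pos : 0 < R^2 - normSq z1 := by linarith
  have hTfin : (S ∩ Metric.closedBall (0:ℂ) R).Finite := finite_discrete_inter S hdisc hScl R
  classical
  set T := hTfin.toFinset with hTdef
  have hTs : ∀ s ∈ T, s ∈ S ∧ ‖s‖ ≤ R := by
    intro s hs
    rw [hTdef, Set.Finite.mem_toFinset] at hs
    refine ⟨hs.1, ?_⟩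
    have := Metric.mem_closedBall.1 hs.2
    rwa [Complex.dist_eq, sub_zero] at this
  have hTmem : ∀ s : ℂ, s ∈ S → ‖s‖ ≤ R → s ∈ T := by
    intro s h1 h2
    rw [hTdef, Set.Finite.mem_toFinset]
    exact ⟨h1, by rwa [Metric.mem_closedBall, Complex.dist_eq, sub_zero]⟩
  have habz1 : ‖z1‖ ≤ R := by
    nlinarith [Complex.sq_norm z1, norm_nonneg z1, hmR, hRpos]
  have hz1K : z1 ∈ Metric.closedBall (0:ℂ) R := by
    rw [Metric.mem_closedBall, Complex.dist_eq, sub_zero]; exact habz1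
  have hz1ne : ∀ s ∈ T, z1 ≠ s := fun s hs h => hz1S (h ▸ (hTs s hs).1)
  have hdz1 : ∀ s ∈ T, 0 < normSq (z1 - s) :=
    fun s hs => normSq_pos.2 (sub_ne_zero.2 (hz1ne s hs))
  have hdle : ∀ y s : ℂ, ‖y‖ ≤ R → ‖s‖ ≤ R → normSq (y - s) ≤ 4*R^2 := by
    intro y s hy hs
    have h1 : ‖y - s‖ ≤ 2*R := by
      calc ‖y - s‖ = ‖y + -s‖ := by rw [sub_eq_add_neg]
        _ ≤ ‖y‖ + ‖-s‖ := norm_add_le _ _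
        _ = ‖y‖ + ‖s‖ := by rw [norm_neg]
        _ ≤ 2*R := by linarith
    nlinarith [Complex.sq_norm (y-s), norm_nonneg (y-s)]
  set ρ := ∏ s ∈ T, (normSq (z1 - s) / (4*R^2)) with hρdef
  have hρpos : 0 < ρ := Finset.prod_pos (fun s hs => div_pos (hdz1 s hs) (by positivity))
  set θ := (4*R^2/c) / (lam z1 * (R^2 - normSq z1)^2) with hθdef
  have hθ1 : θ < 1 := (div_lt_one (by positivity)).2 hmain
  obtain ⟨ε, hεm, hεθ⟩ : ∃ ε : ℝ, 0 < ε ∧ θ < ρ ^ ε := by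
    have hcont : Tendsto (fun e : ℝ => ρ ^ e) (𝓝 0) (𝓝 1) := by
      have h1 : Tendsto (fun e : ℝ => Real.exp (Real.log ρ * e)) (𝓝 0) (𝓝 1) := by
        have h2 : Continuous (fun e : ℝ => Real.exp (Real.log ρ * e)) := by fun_prop
        have h3 := h2.tendsto 0
        simpa using h3
      apply h1.congr
      intro e; rw [Real.rpow_def_of_pos hρpos]
    have hev : ∀ᶠ e in 𝓝 (0:ℝ), θ < ρ ^ e := hcont.eventually (eventually_gt_nhds hθ1)
    have hev' : ∀ᶠ e in 𝓝[>] (0:ℝ), θ < ρ ^ e := hev.filter_mono nhdsWithin_le_nhds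
    obtain ⟨e, he1, he2⟩ := (hev'.and self_mem_nhdsWithin).exists
    exact ⟨e, he2, he1⟩
  set F : ℂ → ℝ := fun w => lam w * (R^2 - normSq w)^2 * ∏ s ∈ T, (normSq (w - s)) ^ ε with hFdef
  have hFnn : ∀ w, 0 ≤ F w := by
    intro w
    apply mul_nonneg (mul_nonneg (hnn w) (by positivity))
    exact Finset.prod_nonneg fun s _ => Real.rpow_nonneg (normSq_nonneg _) _
  have hFcont : ContinuousOn F (Metric.closedBall (0:ℂ) R) := by
    intro w hwK
    by_cases hwS : w ∈ S
    · -- w ∈ S : squeeze to zero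
      have hwT : w ∈ T := hTmem w hwS
        (by rwa [Metric.mem_closedBall, Complex.dist_eq, sub_zero] at hwK)
      have hFw0 : F w = 0 := by
        have hz : ∏ s ∈ T, (normSq (w - s)) ^ ε = 0 :=
          Finset.prod_eq_zero hwT (by rw [sub_self, normSq_zero, Real.zero_rpow hεm.ne'])
        simp only [hFdef, hz, mul_zero]
      obtain ⟨δ, hδ, hBdd⟩ := hbdd w
      obtain ⟨M, hM⟩ := hBdd
      set M₀ := max M 0 with hM₀def
      have hM₀nn : (0:ℝ) ≤ M₀ := le_max_right M 0
      set n := (T.erase w).card with hndef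
      set C := M₀ * (R^2)^2 * ((4*R^2)^ε)^n with hCdef
      have hub : ∀ᶠ y in 𝓝[Metric.closedBall (0:ℂ) R] w, F y ≤ C * (normSq (y - w)) ^ ε := by
        filter_upwards [mem_nhdsWithin_of_mem_nhds (Metric.ball_mem_nhds w hδ),
          self_mem_nhdsWithin] with y hyδ hyK
        have hyR : ‖y‖ ≤ R := by
          rwa [Metric.mem_closedBall, Complex.dist_eq, sub_zero] at hyK
        have hlamy : lam y ≤ M₀ := le_trans (hM ⟨y, hyδ, rfl⟩) (le_max_left _ _)
        have hnsy : normSq y ≤ R^2 := by nlinarith [Complex.sq_norm y, norm_nonneg y]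
        have hg2 : (R^2 - normSq y)^2 ≤ (R^2)^2 := by nlinarith [normSq_nonneg y]
        have hsplit : ∏ s ∈ T, (normSq (y - s)) ^ ε
            = (normSq (y - w)) ^ ε * ∏ s ∈ T.erase w, (normSq (y - s)) ^ ε :=
          (Finset.mul_prod_erase T _ hwT).symm
        have hprodle : ∏ s ∈ T.erase w, (normSq (y - s)) ^ ε ≤ ((4*R^2)^ε)^n := by
          rw [hndef, ← Finset.prod_const]
          apply Finset.prod_le_prod (fun s _ => Real.rpow_nonneg (normSq_nonneg _) ε)
          intro s hs
          exact Real.rpow_le_rpow (normSq_nonneg _)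
            (hdle y s hyR (hTs s (Finset.mem_of_mem_erase hs)).2) hεm.le
        have h1 : F y ≤ M₀ * (R^2)^2 * ((normSq (y - w)) ^ ε * ((4*R^2)^ε)^n) := by
          simp only [hFdef]
          rw [hsplit]
          apply mul_le_mul
          · apply mul_le_mul hlamy hg2 (by positivity) hM₀nn
          · exact mul_le_mul_of_nonneg_left hprodle (Real.rpow_nonneg (normSq_nonneg _) _)
          · exact mul_nonneg (Real.rpow_nonneg (normSq_nonneg _) _)
              (Finset.prod_nonneg fun s _ => Real.rpow_nonneg (normSq_nonneg _) _)
          · exact mul_nonneg hM₀nn (by positivity)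
        calc F y ≤ M₀ * (R^2)^2 * ((normSq (y - w)) ^ ε * ((4*R^2)^ε)^n) := h1
          _ = C * (normSq (y - w)) ^ ε := by rw [hCdef]; ring
      have htendC : Tendsto (fun y => C * (normSq (y - w)) ^ ε)
          (𝓝[Metric.closedBall (0:ℂ) R] w) (𝓝 0) := by
        have h1 : Tendsto (fun y : ℂ => normSq (y - w)) (𝓝 w) (𝓝 0) := by
          have hcont : Continuous (fun y : ℂ => normSq (y - w)) :=
            continuous_normSq'.comp (continuous_id.sub continuous_const)
          have h2 := hcont.tendsto w
          simpa using h2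
        have h2 : ContinuousAt (fun x : ℝ => x ^ ε) 0 :=
          Real.continuousAt_rpow_const 0 ε (Or.inr hεm.le)
        have h3 := h2.tendsto.comp h1
        rw [Real.zero_rpow hεm.ne'] at h3
        have h4 := h3.const_mul C
        simpa using h4.mono_left nhdsWithin_le_nhds
      show Tendsto F _ (𝓝 (F w))
      rw [hFw0]
      exact tendsto_of_tendsto_of_tendsto_of_le_of_le' tendsto_const_nhds htendC
        (Eventually.of_forall fun y => hFnn y) hub
    · -- w ∉ S : continuous
      apply ContinuousAt.continuousWithinAt
      have hlamc : ContinuousAt lam w := hsm.continuousOn.continuousAt (hSo.mem_nhds hwS)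
      have h2c : ContinuousAt (fun w : ℂ => (R^2 - normSq w)^2) w :=
        ((continuous_const.sub continuous_normSq').pow 2).continuousAt
      have hpc : ContinuousAt (fun w : ℂ => ∏ s ∈ T, (normSq (w - s)) ^ ε) w := by
        apply continuousAt_finset_prod'
        intro i hi
        have hne : normSq (w - i) ≠ 0 :=
          (normSq_pos.2 (sub_ne_zero.2 (fun h => hwS (by rw [h]; exact (hTs i hi).1)))).ne'
        have hb : Continuous (fun v : ℂ => normSq (v - i)) :=
          continuous_normSq'.comp (continuous_id.sub continuous_const)
        exact ContinuousAt.comp (g := fun x : ℝ => x ^ ε) (f := fun v : ℂ => normSq (v - i))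
          (Real.continuousAt_rpow_const _ ε (Or.inl hne)) hb.continuousAt
      exact (hlamc.mul h2c).mul hpc
  obtain ⟨z0, hz0K, hz0max⟩ := (isCompact_closedBall (0:ℂ) R).exists_isMaxOn ⟨z1, hz1K⟩ hFcont
  have hFz1pos : 0 < F z1 := by
    apply mul_pos (mul_pos hap (pow_pos hg1pos 2))
    exact Finset.prod_pos fun s hs => Real.rpow_pos_of_pos (hdz1 s hs) _
  have hFz1le : F z1 ≤ F z0 := hz0max hz1K
  have habz0 : ‖z0‖ ≤ R := by
    rwa [Metric.mem_closedBall, Complex.dist_eq, sub_zero] at hz0K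
  have hz0S : z0 ∉ S := by
    intro hz0mem
    have hz0T : z0 ∈ T := hTmem z0 hz0mem habz0
    have hF0 : F z0 = 0 := by
      have hz : ∏ s ∈ T, (normSq (z0 - s)) ^ ε = 0 :=
        Finset.prod_eq_zero hz0T (by rw [sub_self, normSq_zero, Real.zero_rpow hεm.ne'])
      simp only [hFdef, hz, mul_zero]
    linarith
  have hns0le : normSq z0 ≤ R^2 := by nlinarith [Complex.sq_norm z0, norm_nonneg z0]
  have hgz0 : normSq z0 < R^2 := by
    rcases lt_or_eq_of_le hns0le with h | h
    · exact h
    · exfalso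
      have hF0 : F z0 = 0 := by
        simp [hFdef, h]
      linarith
  have hlamz0 : 0 < lam z0 := hpos z0 hz0S
  have hz0ne : ∀ s ∈ T, z0 ≠ s := fun s hs h => hz0S (by rw [h]; exact (hTs s hs).1)
  have hdz0 : ∀ s ∈ T, 0 < normSq (z0 - s) :=
    fun s hs => normSq_pos.2 (sub_ne_zero.2 (hz0ne s hs))
  set G : ℂ → ℝ := fun w => Real.log (lam w) +
      (2 * Real.log (R^2 - normSq w) + ε * ∑ s ∈ T, Real.log (normSq (w - s))) with hGdef
  have hFeqG : ∀ w : ℂ, w ∉ S → normSq w < R^2 → F w = Real.exp (G w) := by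
    intro w hw hgw
    have hlw : 0 < lam w := hpos w hw
    have hds : ∀ s ∈ T, 0 < normSq (w - s) :=
      fun s hs => normSq_pos.2 (sub_ne_zero.2 (fun h => hw (by rw [h]; exact (hTs s hs).1)))
    have hgwpos : 0 < R^2 - normSq w := by linarith
    simp only [hGdef, hFdef]
    rw [Real.exp_add, Real.exp_add, Real.exp_log hlw, mul_assoc]
    congr 1
    congr 1
    · rw [show (2:ℝ) * Real.log (R^2 - normSq w) = Real.log ((R^2 - normSq w)^2) by
            rw [Real.log_pow]; norm_num,
          Real.exp_log (pow_pos hgwpos 2)]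
    · rw [Finset.mul_sum, Real.exp_sum]
      exact (Finset.prod_congr rfl fun s hs => by
        rw [Real.rpow_def_of_pos (hds s hs), mul_comm]).symm
  have hGmax : ∀ᶠ w in 𝓝 z0, G w ≤ G z0 := by
    have hev1 : ∀ᶠ w in 𝓝 z0, w ∈ Sᶜ := hSo.eventually_mem hz0S
    have hev3 : ∀ᶠ w in 𝓝 z0, normSq w < R^2 :=
      (continuous_normSq'.continuousAt).eventually (eventually_lt_nhds hgz0)
    filter_upwards [hev1, hev3] with w h1 h3
    have hwK : w ∈ Metric.closedBall (0:ℂ) R := by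
      rw [Metric.mem_closedBall, Complex.dist_eq, sub_zero]
      nlinarith [Complex.sq_norm w, norm_nonneg w]
    have hFle : F w ≤ F z0 := hz0max hwK
    rw [hFeqG w h1 h3, hFeqG z0 hz0S hgz0] at hFle
    exact Real.exp_le_exp.1 hFle
  have hnormSqcd : ContDiff ℝ 2 (fun w : ℂ => normSq w) := by
    have h : (fun z : ℂ => Complex.normSq z) = fun z : ℂ => z.re * z.re + z.im * z.im :=
      funext fun z => Complex.normSq_apply z
    rw [h]
    exact (Complex.reCLM.contDiff.mul Complex.reCLM.contDiff).add
      (Complex.imCLM.contDiff.mul Complex.imCLM.contDiff)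
  have hlamcd : ContDiffAt ℝ 2 lam z0 :=
    (hsm.contDiffAt (hSo.mem_nhds hz0S)).of_le (WithTop.coe_le_coe.2 le_top)
  have c1 : ContDiffAt ℝ 2 (fun w => Real.log (lam w)) z0 := hlamcd.log hlamz0.ne'
  have c2 : ContDiffAt ℝ 2 (fun w => Real.log (R^2 - normSq w)) z0 :=
    (contDiffAt_const.sub hnormSqcd.contDiffAt).log (by intro h'; rw [sub_eq_zero] at h'; linarith)
  have c2' : ContDiffAt ℝ 2 (fun w => 2 * Real.log (R^2 - normSq w)) z0 :=
    contDiffAt_const.mul c2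
  have c3 : ∀ s ∈ T, ContDiffAt ℝ 2 (fun w => Real.log (normSq (w - s))) z0 := by
    intro s hs
    have hb : ContDiff ℝ 2 (fun w : ℂ => normSq (w - s)) :=
      hnormSqcd.comp (contDiff_id.sub contDiff_const)
    exact hb.contDiffAt.log (hdz0 s hs).ne'
  have c3s : ContDiffAt ℝ 2 (fun w => ∑ s ∈ T, Real.log (normSq (w - s))) z0 :=
    ContDiffAt.sum c3
  have c3' : ContDiffAt ℝ 2 (fun w => ε * ∑ s ∈ T, Real.log (normSq (w - s))) z0 :=
    contDiffAt_const.mul c3s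
  have c23 : ContDiffAt ℝ 2 (fun w => 2 * Real.log (R^2 - normSq w)
      + ε * ∑ s ∈ T, Real.log (normSq (w - s))) z0 := c2'.add c3'
  have hGcd : ContDiffAt ℝ 2 G z0 := c1.add c23
  have hlapG : laplacianC G z0 ≤ 0 := by
    have hlx : IsLocalMax (fun x : ℝ => G (z0 + (x:ℝ))) 0 := by
      have hco : Continuous (fun x : ℝ => z0 + ((x:ℝ):ℂ)) := by fun_prop
      have ht := hco.tendsto 0
      have ht' : Tendsto (fun x : ℝ => z0 + ((x:ℝ):ℂ)) (𝓝 0) (𝓝 z0) := by simpa using ht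
      have hev := ht'.eventually hGmax
      simp only [IsLocalMax, IsMaxFilter]
      simpa using hev
    have hly : IsLocalMax (fun y : ℝ => G (z0 + (y:ℝ) * Complex.I)) 0 := by
      have hco : Continuous (fun y : ℝ => z0 + ((y:ℝ):ℂ) * Complex.I) := by fun_prop
      have ht := hco.tendsto 0
      have ht' : Tendsto (fun y : ℝ => z0 + ((y:ℝ):ℂ) * Complex.I) (𝓝 0) (𝓝 z0) := by
        simpa using ht
      have hev := ht'.eventually hGmax
      simp only [IsLocalMax, IsMaxFilter]
      simpa using hev
    have h1 := secondDeriv_nonpos_of_isLocalMax (lineX_contDiffAt hGcd) hlx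
    have h2 := secondDeriv_nonpos_of_isLocalMax (lineY_contDiffAt hGcd) hly
    unfold laplacianC
    exact add_nonpos h1 h2
  have hlapEq : laplacianC G z0 = laplacianC (fun w => Real.log (lam w)) z0 +
      (2 * (-(4*R^2) / (R^2 - normSq z0)^2) + ε * 0) := by
    simp only [hGdef]
    rw [laplacianC_add (fun w => Real.log (lam w))
        (fun w => 2 * Real.log (R^2 - normSq w) + ε * ∑ s ∈ T, Real.log (normSq (w - s)))
        z0 c1 c23]
    rw [laplacianC_add (fun w => 2 * Real.log (R^2 - normSq w))
        (fun w => ε * ∑ s ∈ T, Real.log (normSq (w - s))) z0 c2' c3']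
    rw [laplacianC_const_mul 2 (fun w => Real.log (R^2 - normSq w)) z0 c2]
    rw [laplacianC_const_mul ε (fun w => ∑ s ∈ T, Real.log (normSq (w - s))) z0 c3s]
    rw [laplacianC_sum T (fun s w => Real.log (normSq (w - s))) z0 c3]
    rw [lap_log_Rsq_sub R z0 hgz0]
    have hz : ∑ s ∈ T, laplacianC (fun w => Real.log (normSq (w - s))) z0 = 0 := by
      apply Finset.sum_eq_zero
      intro s hs
      exact lap_log_normSq_sub s z0 (hz0ne s hs)
    rw [hz]
  have hkey : lam z0 * (R^2 - normSq z0)^2 ≤ 4*R^2/c := by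
    have hcv := hcurv z0 hz0S
    have heq : -(2 * (-(4*R^2) / (R^2 - normSq z0)^2)) = 8*R^2/(R^2 - normSq z0)^2 := by
      ring
    have h8 : 2*c*lam z0 ≤ 8*R^2/(R^2 - normSq z0)^2 := by
      rw [hlapEq] at hlapG
      linarith
    have hg2 : (0:ℝ) < (R^2 - normSq z0)^2 := pow_pos (by linarith) 2
    rw [le_div_iff₀ hc]
    have h' := mul_le_mul_of_nonneg_right h8 hg2.le
    rw [div_mul_cancel₀ _ hg2.ne'] at h'
    nlinarith [h']
  have hQpos : 0 < ∏ _s ∈ T, ((4*R^2) ^ ε : ℝ) :=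
    Finset.prod_pos fun s _ => Real.rpow_pos_of_pos (by positivity) _
  have hF0le : F z0 ≤ (4*R^2/c) * ∏ _s ∈ T, ((4*R^2) ^ ε : ℝ) := by
    simp only [hFdef]
    apply mul_le_mul hkey ?_ ?_ (by positivity)
    · apply Finset.prod_le_prod (fun s _ => Real.rpow_nonneg (normSq_nonneg _) ε)
      intro s hs
      exact Real.rpow_le_rpow (normSq_nonneg _) (hdle z0 s habz0 (hTs s hs).2) hεm.le
    · exact Finset.prod_nonneg fun s _ => Real.rpow_nonneg (normSq_nonneg _) _
  have hFz1eq : F z1 = (lam z1 * (R^2 - normSq z1)^2)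
      * (ρ ^ ε * ∏ _s ∈ T, ((4*R^2) ^ ε : ℝ)) := by
    simp only [hFdef]
    congr 1
    rw [hρdef, ← Real.finset_prod_rpow T _
      (fun s _ => (div_nonneg (normSq_nonneg _) (by positivity))) ε, ← Finset.prod_mul_distrib]
    apply Finset.prod_congr rfl
    intro s hs
    rw [← Real.mul_rpow (div_nonneg (normSq_nonneg _) (by positivity)) (by positivity)]
    congr 1
    field_simp
  have hchain : (lam z1 * (R^2 - normSq z1)^2) * ρ ^ ε ≤ 4*R^2/c := by
    have h1 : ((lam z1 * (R^2 - normSq z1)^2) * ρ ^ ε) * ∏ _s ∈ T, ((4*R^2) ^ ε : ℝ)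
        ≤ (4*R^2/c) * ∏ _s ∈ T, ((4*R^2) ^ ε : ℝ) := by
      calc ((lam z1 * (R^2 - normSq z1)^2) * ρ ^ ε) * ∏ _s ∈ T, ((4*R^2) ^ ε : ℝ)
          = F z1 := by rw [hFz1eq]; ring
        _ ≤ F z0 := hFz1le
        _ ≤ (4*R^2/c) * ∏ _s ∈ T, ((4*R^2) ^ ε : ℝ) := hF0le
    exact le_of_mul_le_mul_right h1 hQpos
  have hfinal : 4*R^2/c < (lam z1 * (R^2 - normSq z1)^2) * ρ ^ ε := by
    rw [hθdef] at hεθ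
    have h2 := (div_lt_iff₀
      (by positivity : (0:ℝ) < lam z1 * (R^2 - normSq z1)^2)).1 hεθ
    nlinarith [h2]
  linarith
end

section
/- Let g be holomorphic on the punctured unit disk 𝔻* and let a ≥ 1, m ≥ 0 be integers. If the function w ↦ g(wᵃ)·w^{m(a-1)} extends holomorphically across w = 0, then g is meromorphic at 0 with pole order at most ⌊m(a-1)/a⌋; equivalently z^{⌊m(1-1/a)⌋}·g(z) extends holomorphically across z = 0. -/
open Metric

lemma orb_pow_abs_rpow (z : ℂ) (n : ℕ) :
    ‖z ^ n‖ = ‖z‖ ^ (n : ℝ) := by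
  rw [norm_pow, Real.rpow_natCast]

/-- let `g` be holomorphic on the punctured unit disk and `a ≥ 1`, `m ≥ 0`
integers. If `w ↦ g(wᵃ)·w^{m(a-1)}` extends holomorphically across `w = 0`, then `g` has a
pole at `0` of order at most `⌊m(a-1)/a⌋`; equivalently `z^{⌊m(1-1/a)⌋}·g(z)` extends
holomorphically across `z = 0`. (Here `⌊m(1-1/a)⌋ = m(a-1)/a` as natural division.) -/
theorem orbifold_symmetric_differential_extension_floor
    (g : ℂ → ℂ) (a m : ℕ) (ha : 1 ≤ a)
    (hg : DifferentiableOn ℂ g (ball (0 : ℂ) 1 \ {0}))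
    (hext : ∃ G : ℂ → ℂ, DifferentiableOn ℂ G (ball (0 : ℂ) 1) ∧
      ∀ w ∈ ball (0 : ℂ) 1 \ {0}, G w = g (w ^ a) * w ^ (m * (a - 1))) :
    ∃ H : ℂ → ℂ, DifferentiableOn ℂ H (ball (0 : ℂ) 1) ∧
      ∀ z ∈ ball (0 : ℂ) 1 \ {0}, H z = z ^ ((m * (a - 1)) / a) * g z := by
  obtain ⟨G, hGd, hGeq⟩ := hext
  set N : ℕ := m * (a - 1) with hN
  set k : ℕ := N / a with hk
  set f : ℂ → ℂ := fun z => z ^ k * g z with hf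
  have ha0 : (0 : ℝ) < a := by exact_mod_cast ha
  have haC : (a : ℂ) ≠ 0 := by exact_mod_cast (Nat.one_le_iff_ne_zero.mp ha)
  -- bound on G near 0
  have hGc : ContinuousAt G 0 := (hGd.differentiableAt (ball_mem_nhds 0 one_pos)).continuousAt
  set C : ℝ := ‖G 0‖ + 1 with hCdef
  have hC0 : 0 ≤ C := by positivity
  obtain ⟨r, hr0, hr1, hC⟩ : ∃ r : ℝ, 0 < r ∧ r < 1 ∧
      ∀ w : ℂ, ‖w‖ ≤ r → ‖G w‖ ≤ C := by
    have hev : ∀ᶠ w in nhds (0:ℂ), ‖G w‖ < C :=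
      hGc.norm.tendsto.eventually_lt_const (by simp [hCdef])
    rw [Metric.eventually_nhds_iff] at hev
    obtain ⟨δ, hδ, hδ'⟩ := hev
    refine ⟨min (δ/2) (1/2), by positivity,
      lt_of_le_of_lt (min_le_right _ _) (by norm_num), fun w hw => ?_⟩
    refine (hδ' ?_).le
    simp only [dist_zero_right]
    calc ‖w‖ ≤ min (δ/2) (1/2) := hw
      _ ≤ δ/2 := min_le_left _ _
      _ < δ := by linarith
  -- pointwise bound on g
  have hgb : ∀ z : ℂ, z ≠ 0 → ‖z‖ < r ^ a →
      ‖g z‖ * ‖z‖ ^ ((N : ℝ) / a) ≤ C := by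
    intro z hz hzr
    have habsz : 0 < ‖z‖ := by
      simpa [norm_pos_iff] using hz
    set w : ℂ := Complex.exp (Complex.log z / a) with hw
    have hwa : w ^ a = z := by
      rw [hw, ← Complex.exp_nat_mul,
        show (a : ℂ) * (Complex.log z / a) = Complex.log z by field_simp]
      exact Complex.exp_log hz
    have habs : ‖w‖ = ‖z‖ ^ ((1 : ℝ) / a) := by
      rw [hw, Complex.norm_exp,
        show ((a : ℂ)) = ((a : ℝ) : ℂ) by push_cast; rfl,
        Complex.div_ofReal_re, Complex.log_re, Real.rpow_def_of_pos habsz]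
      ring_nf
    have hwr : ‖w‖ ≤ r := by
      rw [habs]
      have : ‖z‖ ^ ((1:ℝ)/a) ≤ (r ^ a) ^ ((1:ℝ)/a) :=
        Real.rpow_le_rpow (norm_nonneg z) hzr.le (by positivity)
      calc ‖z‖ ^ ((1:ℝ)/a) ≤ (r ^ a) ^ ((1:ℝ)/a) := this
        _ = r := by
          rw [← Real.rpow_natCast r a, ← Real.rpow_mul hr0.le]
          rw [show (a : ℝ) * ((1:ℝ)/a) = 1 by field_simp]
          exact Real.rpow_one r
    have hw0 : w ≠ 0 := Complex.exp_ne_zero _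
    have hwball : w ∈ ball (0 : ℂ) 1 \ {0} := by
      constructor
      · simp only [mem_ball, dist_zero_right]
        exact lt_of_le_of_lt hwr hr1
      · simpa using hw0
    have hGw : G w = g z * w ^ N := by rw [hGeq w hwball, hwa]
    have hwN : ‖w ^ N‖ = ‖z‖ ^ ((N : ℝ) / a) := by
      rw [orb_pow_abs_rpow, habs, ← Real.rpow_mul (norm_nonneg z)]
      congr 1
      field_simp
    calc ‖g z‖ * ‖z‖ ^ ((N : ℝ) / a)
        = ‖g z‖ * ‖w ^ N‖ := by rw [hwN]
      _ = ‖G w‖ := by rw [hGw]; simp [norm_mul]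
      _ ≤ C := hC w hwr
  -- the little-o tendsto estimate
  have hklt : (N : ℝ) / a < (k : ℝ) + 1 := by
    rw [div_lt_iff₀ ha0]
    have : N < (k + 1) * a := (Nat.div_lt_iff_lt_mul (by omega)).mp (Nat.lt_succ_self k)
    exact_mod_cast this
  set ε : ℝ := ((k : ℝ) + 1) - (N : ℝ) / a with hε
  have hε0 : 0 < ε := by simp only [hε]; linarith
  have hT : Filter.Tendsto (fun z : ℂ => f z * z) (nhdsWithin (0:ℂ) {0}ᶜ) (nhds 0) := by
    apply squeeze_zero_norm' (a := fun z : ℂ => C * ‖z‖ ^ ε)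
    · have h1 : ∀ᶠ z : ℂ in nhdsWithin (0:ℂ) {0}ᶜ, ‖z‖ < r ^ a := by
        refine Filter.eventually_iff_exists_mem.mpr ⟨{0}ᶜ ∩ ball 0 (r ^ a),
          inter_mem_nhdsWithin _ (ball_mem_nhds 0 (by positivity)), fun z hz => ?_⟩
        simpa using hz.2
      have h2 : ∀ᶠ z : ℂ in nhdsWithin (0:ℂ) {0}ᶜ, z ≠ 0 :=
        eventually_mem_nhdsWithin.mono fun z hz => hz
      filter_upwards [h1, h2] with z hzr hz
      have habsz : 0 < ‖z‖ := by simpa [norm_pos_iff] using hz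
      have h3 : ‖f z * z‖ = ‖z‖ ^ ((k : ℝ) + 1) * ‖g z‖ := by
        simp only [hf, norm_mul, norm_pow]
        rw [show (k : ℝ) + 1 = ((k + 1 : ℕ) : ℝ) by push_cast; ring, Real.rpow_natCast, pow_succ]
        ring
      rw [h3]
      have h4 : ‖z‖ ^ ((k : ℝ) + 1) * ‖g z‖ =
          (‖g z‖ * ‖z‖ ^ ((N : ℝ) / a)) * ‖z‖ ^ ε := by
        rw [mul_assoc, ← Real.rpow_add habsz]
        rw [show (N : ℝ) / a + ε = (k : ℝ) + 1 by simp [hε]]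
        ring
      rw [h4]
      exact mul_le_mul_of_nonneg_right (hgb z hz hzr) (Real.rpow_nonneg (norm_nonneg z) ε)
    · have h1 : Filter.Tendsto (fun z : ℂ => ‖z‖) (nhdsWithin (0:ℂ) {0}ᶜ) (nhds 0) := by
        have := (continuous_norm.tendsto (0:ℂ)).mono_left
          (nhdsWithin_le_nhds (s := {0}ᶜ))
        simpa using this
      have h2 : Filter.Tendsto (fun x : ℝ => C * x ^ ε) (nhds 0) (nhds 0) := by
        have hc : ContinuousAt (fun x : ℝ => x ^ ε) 0 :=
          Real.continuousAt_rpow_const 0 ε (Or.inr hε0.le)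
        have := (hc.tendsto).const_mul C
        simpa [Real.zero_rpow hε0.ne'] using this
      exact h2.comp h1
  -- little-o for removable singularity
  have ho : (fun z : ℂ => f z - f 0) =o[nhdsWithin (0:ℂ) {0}ᶜ] fun z => (z - 0)⁻¹ := by
    have hgf : ∀ᶠ z : ℂ in nhdsWithin (0:ℂ) {0}ᶜ, (z - 0)⁻¹ = 0 → f z - f 0 = 0 := by
      filter_upwards [eventually_mem_nhdsWithin] with z hz h
      exact absurd (by simpa [sub_eq_zero, inv_eq_zero] using h) hz
    apply (Asymptotics.isLittleO_iff_tendsto' hgf).mpr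
    · have hc : Filter.Tendsto (fun z : ℂ => f 0 * z) (nhdsWithin (0:ℂ) {0}ᶜ) (nhds 0) := by
        have hcont : Continuous (fun z : ℂ => f 0 * z) := continuous_const.mul continuous_id
        have := (hcont.tendsto (0:ℂ)).mono_left (nhdsWithin_le_nhds (s := {0}ᶜ))
        simpa using this
      have := hT.sub hc
      simp only [sub_zero]
      refine Filter.Tendsto.congr' ?_ (by simpa using this)
      filter_upwards [] with z
      rw [div_eq_mul_inv, inv_inv]
      ring
  -- apply removable singularity
  have hfd : DifferentiableOn ℂ f (ball (0:ℂ) 1 \ {0}) :=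
    ((differentiable_pow k).differentiableOn).mul hg
  have hmain := Complex.differentiableOn_update_limUnder_of_isLittleO
    (ball_mem_nhds (0:ℂ) one_pos) hfd ho
  refine ⟨_, hmain, fun z hz => ?_⟩
  rw [Function.update_of_ne (by simpa using hz.2)]
end
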